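/- Let $0<q<1$, $\tau\in\mathbb{R}$, and define $\mathcal{L}(p)=\sum_{n=0}^\infty \frac{q^{2n(\tau)} q^{n(n-1)}}{(q^2;q^2)_n} p(q^{-2n})$ and the q-Charlier polynomials $c_k(x;a;q^2)={}_2\varphi_1(q^{-2k},x;0;q^2,-q^{2k+2}/a)$. Then for all $k,l \ge 0$ with $k \ge l$, $\mathcal{L}\big(x^{-1} c_k(x;q^{2\tau};q^2) c_l(x;q^{2\tau};q^2)\big) = c_l(0;q^{2\tau};q^2)\cdot \mathcal{L}\big(x^{-1} c_k(x;q^{2\tau};q^2)\big)$. -/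

import Mathlib

open Complex Finset

noncomputable def qp (a q : ℂ) (k : ℕ) : ℂ := ∏ i ∈ Finset.range k, (1 - a * q ^ i)


/-- The q-Charlier polynomial `cₙ(x;a;Q) = ₂φ₁(Q^{-n},x;0;Q,-Q^{n+1}/a)` in base `Q`. -/
noncomputable def qCharlier (Q : ℂ) (n : ℕ) (a x : ℂ) : ℂ :=
  ∑ k ∈ Finset.range (n + 1),
    qp (Q⁻¹ ^ n) Q k * qp x Q k / qp Q Q k * (-Q ^ (n + 1) / a) ^ k

/-- The moment functional `L(p) = ∑_{n≥0} q^{2nτ} q^{n(n-1)}/(q²;q²)ₙ p(q^{-2n})`. -/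
noncomputable def Lfun (q τ : ℝ) (p : ℂ → ℂ) : ℂ :=
  ∑' n : ℕ, ((q ^ (2 * (n : ℝ) * τ) : ℝ) : ℂ) * (q : ℂ) ^ (n * (n - 1)) /
      qp ((q : ℂ) ^ 2) ((q : ℂ) ^ 2) n * p (((q : ℂ) ^ 2)⁻¹ ^ n)

lemma qp_zero (a Q : ℂ) : qp a Q 0 = 1 := by simp [qp]

lemma qp_succ (a Q : ℂ) (k : ℕ) : qp a Q (k+1) = qp a Q k * (1 - a * Q^k) :=
  Finset.prod_range_succ _ _

/-- Peeling the first factor of the numerator q-factorial. -/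
lemma qp_peel (Q : ℂ) (hQ : Q ≠ 0) (k s : ℕ) :
    qp (Q⁻¹ ^ (k+1)) Q (s+1) = (1 - Q⁻¹ ^ (k+1)) * qp (Q⁻¹ ^ k) Q s := by
  rw [qp, Finset.prod_range_succ']
  simp only [pow_zero, mul_one]
  rw [mul_comm]
  congr 1
  refine Finset.prod_congr rfl fun i _ => ?_
  congr 1
  rw [pow_succ Q⁻¹ k, pow_succ' Q i]
  field_simp

lemma qp_peel_z (Q : ℂ) (hQ : Q ≠ 0) (k : ℕ) (z : ℂ) :
    qp (z * Q⁻¹ ^ (k+1)) Q (k+1) = (1 - z * Q⁻¹ ^ (k+1)) * qp (z * Q⁻¹ ^ k) Q k := by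
  rw [qp, Finset.prod_range_succ']
  simp only [pow_zero, mul_one]
  rw [mul_comm]
  congr 1
  refine Finset.prod_congr rfl fun i _ => ?_
  congr 1
  rw [pow_succ Q⁻¹ k, pow_succ' Q i]
  field_simp

lemma qp_top_zero (Q : ℂ) (hQ : Q ≠ 0) (k : ℕ) : qp (Q⁻¹ ^ k) Q (k+1) = 0 := by
  refine Finset.prod_eq_zero (Finset.self_mem_range_succ k) ?_
  rw [inv_pow, inv_mul_cancel₀ (pow_ne_zero k hQ)]
  ring

/-- q-Pascal recurrence for the coefficients. -/
lemma qp_pascal (Q : ℂ) (hQ : Q ≠ 0) (hD : ∀ n, qp Q Q n ≠ 0) (k s : ℕ) :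
    qp (Q⁻¹ ^ (k+1)) Q (s+1) / qp Q Q (s+1) =
      qp (Q⁻¹ ^ k) Q (s+1) / qp Q Q (s+1)
        - Q⁻¹ ^ (k+1) * (qp (Q⁻¹ ^ k) Q s / qp Q Q s) := by
  rw [qp_peel Q hQ, qp_succ (Q⁻¹ ^ k), qp_succ Q Q s]
  have h1 : qp Q Q s ≠ 0 := hD s
  have h2 : (1 - Q * Q ^ s) ≠ 0 := by
    have := hD (s+1); rw [qp_succ] at this
    exact fun h => this (by rw [h, mul_zero])
  field_simp
  ring_nf
  linear_combination (-(Q^s * Q⁻¹^k * qp (Q⁻¹ ^ k) Q s)) * (mul_inv_cancel₀ hQ)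

/-- Finite q-binomial theorem in the needed form. -/
lemma qp_binom (Q : ℂ) (hQ : Q ≠ 0) (hD : ∀ n, qp Q Q n ≠ 0) (k : ℕ) (z : ℂ) :
    ∑ s ∈ Finset.range (k+1), qp (Q⁻¹ ^ k) Q s / qp Q Q s * z ^ s
      = qp (z * Q⁻¹ ^ k) Q k := by
  induction k with
  | zero => simp [qp]
  | succ k ih =>
    rw [qp_peel_z Q hQ, ← ih, Finset.sum_range_succ']
    simp only [pow_zero, mul_one, qp_zero]
    have hstep : ∀ s ∈ Finset.range (k+1),
        qp (Q⁻¹ ^ (k+1)) Q (s+1) / qp Q Q (s+1) * z ^ (s+1)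
          = qp (Q⁻¹ ^ k) Q (s+1) / qp Q Q (s+1) * z ^ (s+1)
            - z * Q⁻¹ ^ (k+1) * (qp (Q⁻¹ ^ k) Q s / qp Q Q s * z ^ s) := by
      intro s _
      rw [qp_pascal Q hQ hD k s]
      ring
    rw [Finset.sum_congr rfl hstep, Finset.sum_sub_distrib, ← Finset.mul_sum]
    have htop : ∑ s ∈ Finset.range (k+1), qp (Q⁻¹ ^ k) Q (s+1) / qp Q Q (s+1) * z ^ (s+1)
        = (∑ s ∈ Finset.range (k+2), qp (Q⁻¹ ^ k) Q s / qp Q Q s * z ^ s) - 1 := by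
      conv_rhs => rw [Finset.sum_range_succ']
      simp [qp_zero]
    rw [htop, Finset.sum_range_succ, qp_top_zero Q hQ k]
    simp only [zero_div, zero_mul, add_zero]
    ring

/-- Splitting the denominator q-factorial. -/
lemma qp_split (Q : ℂ) (m s : ℕ) :
    qp Q Q (m + s) = qp Q Q m * ∏ i ∈ Finset.range s, (1 - Q ^ (m + 1 + i)) := by
  rw [qp, Finset.prod_range_add, qp]
  congr 1
  refine Finset.prod_congr rfl fun i _ => ?_
  rw [← pow_succ' Q (m + i)]
  congr 2
  omega

/-- The shifted numerator factorial, cleared of negative powers. -/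
lemma qp_shift (Q : ℂ) (hQ : Q ≠ 0) (m s : ℕ) :
    qp (Q⁻¹ ^ (m + s)) Q s * ∏ i ∈ Finset.range s, Q ^ (m + s - i)
      = (-1) ^ s * ∏ i ∈ Finset.range s, (1 - Q ^ (m + 1 + i)) := by
  rw [qp, ← Finset.prod_mul_distrib]
  have h1 : ∀ i ∈ Finset.range s,
      (1 - Q⁻¹ ^ (m + s) * Q ^ i) * Q ^ (m + s - i) = -(1 - Q ^ (m + s - i)) := by
    intro i hi
    rw [Finset.mem_range] at hi
    have hi' : i + (m + s - i) = m + s := by omega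
    rw [sub_mul, one_mul, mul_assoc, ← pow_add, hi', inv_pow,
      inv_mul_cancel₀ (pow_ne_zero _ hQ)]
    ring
  rw [Finset.prod_congr rfl h1]
  have h2 : ∀ i ∈ Finset.range s, -(1 - Q ^ (m + s - i)) = (-1) * (1 - Q ^ (m + s - i)) := by
    intro i _; ring
  rw [Finset.prod_congr rfl h2, Finset.prod_mul_distrib, Finset.prod_const, Finset.card_range]
  congr 1
  rw [← Finset.prod_range_reflect (fun i => 1 - Q ^ (m + 1 + i)) s]
  refine Finset.prod_congr rfl fun i hi => ?_
  rw [Finset.mem_range] at hi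
  congr 2
  omega

open Filter in
/-- Master summability lemma: Gaussian decay beats exponential growth. -/
lemma summable_gauss {q : ℝ} (hq0 : 0 < q) (hq1 : q < 1) (C R : ℝ) (hR : 0 ≤ R)
    (f : ℕ → ℂ) (h : ∀ n, ‖f n‖ ≤ C * R ^ n * q ^ (n * (n - 1))) : Summable f := by
  have hC : 0 ≤ C := le_trans (norm_nonneg (f 0)) (by simpa using h 0)
  have h2 : Tendsto (fun n : ℕ => R * q ^ n) atTop (nhds 0) := by
    have := (tendsto_pow_atTop_nhds_zero_of_lt_one hq0.le hq1).const_mul R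
    simpa using this
  have h3 : ∀ᶠ n : ℕ in atTop, R * q ^ n < 1/2 :=
    (tendsto_order.1 h2).2 (1/2) (by norm_num)
  obtain ⟨N, hN⟩ := eventually_atTop.1 h3
  refine Summable.of_norm_bounded_eventually_nat (g := fun n => C * (1/2) ^ n)
    (((summable_geometric_of_lt_one (by norm_num) (by norm_num))).mul_left C) ?_
  filter_upwards [eventually_ge_atTop (N+1)] with n hn
  have hq' : 0 ≤ R * q ^ (n - 1) := by positivity
  have hle : R * q ^ (n - 1) ≤ 1/2 := (hN (n-1) (by omega)).le
  calc ‖f n‖ ≤ C * R ^ n * q ^ (n * (n - 1)) := h n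
    _ = C * (R * q ^ (n - 1)) ^ n := by
        rw [mul_pow, ← pow_mul, mul_comm (n-1) n, mul_assoc]
    _ ≤ C * (1/2) ^ n := by gcongr

lemma cast_qp (r : ℝ) (n : ℕ) :
    qp (r : ℂ) (r : ℂ) n = ((∏ i ∈ Finset.range n, (1 - r * r ^ i) : ℝ) : ℂ) := by
  rw [qp]; push_cast; rfl

lemma Dprod_pos {r : ℝ} (hr0 : 0 < r) (hr1 : r < 1) (n : ℕ) :
    0 < ∏ i ∈ Finset.range n, (1 - r * r ^ i) := by
  refine Finset.prod_pos fun i _ => ?_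
  have : r * r ^ i ≤ r * 1 := by
    have : r ^ i ≤ 1 := pow_le_one₀ hr0.le hr1.le
    nlinarith
  nlinarith

lemma Dprod_ge {r : ℝ} (hr0 : 0 < r) (hr1 : r < 1) (n : ℕ) :
    (1 - r) ^ n ≤ ∏ i ∈ Finset.range n, (1 - r * r ^ i) := by
  have hc : (1 - r) ^ n = ∏ _i ∈ Finset.range n, (1 - r) := by
    rw [Finset.prod_const, Finset.card_range]
  rw [hc]
  refine Finset.prod_le_prod (fun i _ => by nlinarith) fun i _ => ?_
  have : r * r ^ i ≤ r * 1 := by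
    have : r ^ i ≤ 1 := pow_le_one₀ hr0.le hr1.le
    nlinarith
  nlinarith

lemma qpD_ne {r : ℝ} (hr0 : 0 < r) (hr1 : r < 1) (n : ℕ) :
    qp (r : ℂ) (r : ℂ) n ≠ 0 := by
  rw [cast_qp]
  exact_mod_cast (Dprod_pos hr0 hr1 n).ne'

lemma rpow_pow (q τ : ℝ) (hq0 : 0 < q) (n : ℕ) :
    (q ^ (2 * (n : ℝ) * τ) : ℝ) = (q ^ (2 * τ)) ^ n := by
  rw [← Real.rpow_natCast (q ^ (2 * τ)) n, ← Real.rpow_mul hq0.le]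
  congr 1
  ring

lemma summable_F (q τ : ℝ) (hq0 : 0 < q) (hq1 : q < 1) (j s : ℕ) (b : ℕ → ℂ)
    (hb : ∀ n, ‖b n‖ ≤ 1) :
    Summable (fun n : ℕ => ((q ^ (2 * (n : ℝ) * τ) : ℝ) : ℂ) * (q : ℂ) ^ (n * (n - 1)) /
        qp ((q : ℂ) ^ 2) ((q : ℂ) ^ 2) n *
        (b n * ((((q : ℂ) ^ 2)⁻¹ ^ n) ^ j * qp (((q : ℂ) ^ 2)⁻¹ ^ n) ((q : ℂ) ^ 2) s))) := by
  have hr0 : (0:ℝ) < q ^ 2 := by positivity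
  have hr1 : q ^ 2 < 1 := by nlinarith
  have hQr : ((q : ℂ)) ^ 2 = ((q ^ 2 : ℝ) : ℂ) := by push_cast; ring
  set r : ℝ := q ^ 2 with hrdef
  have ha : (0:ℝ) < q ^ (2 * τ) := Real.rpow_pos_of_pos hq0 _
  have hinv : (1:ℝ) ≤ r⁻¹ := by
    rw [← one_div, le_div_iff₀ hr0]; nlinarith
  refine summable_gauss hq0 hq1 (2 ^ s)
    (q ^ (2 * τ) * (1 - r)⁻¹ * ((r⁻¹) ^ j * (r⁻¹) ^ s))
    (mul_nonneg (mul_nonneg ha.le (inv_nonneg.2 (by nlinarith))) (by positivity)) _ fun n => ?_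
  have e1 : ‖((q ^ (2 * (n : ℝ) * τ) : ℝ) : ℂ)‖ = (q ^ (2 * τ)) ^ n := by
    rw [Complex.norm_real, Real.norm_eq_abs, rpow_pow q τ hq0 n, abs_of_pos (by positivity)]
  have e2 : ‖(q : ℂ) ^ (n * (n - 1))‖ = q ^ (n * (n - 1)) := by
    rw [norm_pow, Complex.norm_real, Real.norm_eq_abs, abs_of_pos hq0]
  have e3 : ‖qp ((q:ℂ)^2) ((q:ℂ)^2) n‖ = ∏ i ∈ Finset.range n, (1 - r * r ^ i) := by
    rw [hQr, cast_qp, Complex.norm_real, Real.norm_eq_abs, abs_of_pos (Dprod_pos hr0 hr1 n)]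
  have e4 : ‖(((q:ℂ)^2)⁻¹ ^ n) ^ j‖ = ((r⁻¹) ^ j) ^ n := by
    rw [norm_pow, norm_pow, norm_inv, hQr, Complex.norm_real, Real.norm_eq_abs,
      abs_of_pos hr0, ← pow_mul, ← pow_mul, mul_comm n j]
  have e5 : ‖qp (((q:ℂ)^2)⁻¹ ^ n) ((q:ℂ)^2) s‖ ≤ 2 ^ s * ((r⁻¹) ^ s) ^ n := by
    rw [qp]
    calc ‖∏ i ∈ Finset.range s, (1 - (((q:ℂ)^2)⁻¹ ^ n) * ((q:ℂ)^2) ^ i)‖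
        = ∏ i ∈ Finset.range s, ‖1 - (((q:ℂ)^2)⁻¹ ^ n) * ((q:ℂ)^2) ^ i‖ := by
          rw [norm_prod]
      _ ≤ ∏ i ∈ Finset.range s, (2 * (r⁻¹) ^ n) := by
          refine Finset.prod_le_prod (fun i _ => norm_nonneg _) fun i _ => ?_
          have h1 : ‖(((q:ℂ)^2)⁻¹ ^ n) * ((q:ℂ)^2) ^ i‖ = (r⁻¹) ^ n * r ^ i := by
            rw [norm_mul, norm_pow, norm_pow, norm_inv, hQr, Complex.norm_real,
              Real.norm_eq_abs, abs_of_pos hr0, inv_pow]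
          calc ‖1 - (((q:ℂ)^2)⁻¹ ^ n) * ((q:ℂ)^2) ^ i‖
              ≤ ‖(1:ℂ)‖ + ‖(((q:ℂ)^2)⁻¹ ^ n) * ((q:ℂ)^2) ^ i‖ := norm_sub_le _ _
            _ = 1 + (r⁻¹) ^ n * r ^ i := by rw [h1, norm_one]
            _ ≤ 2 * (r⁻¹) ^ n := by
                have hp1 : (1:ℝ) ≤ (r⁻¹) ^ n := one_le_pow₀ hinv
                have hp2 : r ^ i ≤ 1 := pow_le_one₀ hr0.le hr1.le
                have hp3 : (r⁻¹) ^ n * r ^ i ≤ (r⁻¹) ^ n * 1 := by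
                  have : (0:ℝ) ≤ (r⁻¹) ^ n := by positivity
                  nlinarith
                nlinarith
      _ = 2 ^ s * ((r⁻¹) ^ s) ^ n := by
          rw [Finset.prod_const, Finset.card_range, mul_pow, ← pow_mul, ← pow_mul, mul_comm s n]
  have hDpos : 0 < ∏ i ∈ Finset.range n, (1 - r * r ^ i) := Dprod_pos hr0 hr1 n
  have hDge : (1 - r) ^ n ≤ ∏ i ∈ Finset.range n, (1 - r * r ^ i) := Dprod_ge hr0 hr1 n
  calc ‖((q ^ (2 * (n : ℝ) * τ) : ℝ) : ℂ) * (q : ℂ) ^ (n * (n - 1)) /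
        qp ((q : ℂ) ^ 2) ((q : ℂ) ^ 2) n *
        (b n * ((((q : ℂ) ^ 2)⁻¹ ^ n) ^ j * qp (((q : ℂ) ^ 2)⁻¹ ^ n) ((q : ℂ) ^ 2) s))‖
      = (q ^ (2 * τ)) ^ n * q ^ (n * (n - 1)) / (∏ i ∈ Finset.range n, (1 - r * r ^ i)) *
        (‖b n‖ * (((r⁻¹) ^ j) ^ n * ‖qp (((q : ℂ) ^ 2)⁻¹ ^ n) ((q : ℂ) ^ 2) s‖)) := by
        simp only [norm_mul, norm_div]
        rw [e1, e2, e3, e4]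
    _ ≤ (q ^ (2 * τ)) ^ n * q ^ (n * (n - 1)) / ((1 - r) ^ n) *
        (1 * (((r⁻¹) ^ j) ^ n * (2 ^ s * ((r⁻¹) ^ s) ^ n))) := by
        have h1r : (0:ℝ) < 1 - r := by nlinarith
        gcongr <;>
          first
            | positivity
            | exact hb n
            | exact e5
            | exact hDge
        
    _ = 2 ^ s * (q ^ (2 * τ) * (1 - r)⁻¹ * ((r⁻¹) ^ j * (r⁻¹) ^ s)) ^ n *
        q ^ (n * (n - 1)) := by
        rw [div_eq_mul_inv, ← inv_pow]
        ring


lemma pow_inv_helper (u : ℂ) (hu : u ≠ 0) (A B C D : ℕ) (h : A + D = C + B) :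
    u ^ A * (u⁻¹) ^ B = u ^ C * (u⁻¹) ^ D := by
  rw [inv_pow, inv_pow, mul_comm (u ^ A), mul_comm (u ^ C), inv_mul_eq_div, inv_mul_eq_div,
    div_eq_div_iff (pow_ne_zero _ hu) (pow_ne_zero _ hu), ← pow_add, ← pow_add, h]

lemma natmul_pred_cast (n : ℕ) : ((n * (n - 1) : ℕ) : ℤ) = (n : ℤ) * n - n := by
  cases n with
  | zero => simp
  | succ k => push_cast [Nat.succ_sub_one]; ring

lemma sum_shift_val (m s : ℕ) :
    2 * (∑ i ∈ Finset.range s, (m + s - i)) = s * (2 * m + s + 1) := by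
  have h1 : ∑ i ∈ Finset.range s, (m + s - i) = ∑ i ∈ Finset.range s, (m + 1 + i) := by
    rw [← Finset.sum_range_reflect (fun i => m + 1 + i) s]
    refine Finset.sum_congr rfl fun i hi => ?_
    rw [Finset.mem_range] at hi
    omega
  rw [h1, Finset.sum_add_distrib, Finset.sum_const, Finset.card_range, smul_eq_mul]
  cases s with
  | zero => simp
  | succ t =>
    have h2 : (∑ i ∈ Finset.range (t+1), i) * 2 = (t+1) * t := by
      have := Finset.sum_range_id_mul_two (t+1)
      simpa [Nat.succ_sub_one] using this
    zify at h2 ⊢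
    linear_combination h2


lemma shift_identity (q τ : ℝ) (hq0 : 0 < q) (hq1 : q < 1) (j s m : ℕ) :
    ((q ^ (2 * ((m + s : ℕ) : ℝ) * τ) : ℝ) : ℂ) * (q : ℂ) ^ ((m + s) * ((m + s) - 1)) /
        qp ((q:ℂ)^2) ((q:ℂ)^2) (m + s) *
        ((((q:ℂ)^2)⁻¹ ^ (m + s)) ^ j * qp (((q:ℂ)^2)⁻¹ ^ (m + s)) ((q:ℂ)^2) s)
      = ((-1) ^ s * ((q ^ (2 * τ) : ℝ) : ℂ) ^ s * (((q:ℂ)^2)⁻¹) ^ (s * (1 + j))) *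
        (((q ^ (2 * (m : ℝ) * τ) : ℝ) : ℂ) * (q : ℂ) ^ (m * (m - 1)) /
          qp ((q:ℂ)^2) ((q:ℂ)^2) m * ((((q:ℂ)^2)⁻¹ ^ m) ^ j)) := by
  have hu : (q:ℂ) ≠ 0 := by exact_mod_cast hq0.ne'
  have hQ : ((q:ℂ)^2) ≠ 0 := pow_ne_zero 2 hu
  have hr0 : (0:ℝ) < q^2 := by positivity
  have hr1 : q^2 < 1 := by nlinarith
  have hQr : ((q:ℂ))^2 = ((q^2 : ℝ):ℂ) := by push_cast; ring
  have ha1 : ((q ^ (2 * ((m + s : ℕ) : ℝ) * τ) : ℝ) : ℂ) =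
      ((q ^ (2*τ) : ℝ) : ℂ) ^ m * ((q ^ (2*τ) : ℝ) : ℂ) ^ s := by
    rw [rpow_pow q τ hq0 (m+s)]
    push_cast
    rw [pow_add]
  have ha2 : ((q ^ (2 * (m:ℝ) * τ) : ℝ) : ℂ) = ((q ^ (2*τ) : ℝ) : ℂ) ^ m := by
    rw [rpow_pow q τ hq0 m]; push_cast; ring
  have hDm : qp ((q:ℂ)^2) ((q:ℂ)^2) m ≠ 0 := by rw [hQr]; exact qpD_ne hr0 hr1 m
  have hP : (∏ i ∈ Finset.range s, (1 - ((q:ℂ)^2) ^ (m+1+i))) ≠ 0 := by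
    refine Finset.prod_ne_zero_iff.2 fun i _ => ?_
    rw [hQr]
    have hc : ((1:ℂ) - ((q^2:ℝ):ℂ) ^ (m+1+i)) = (((1 - (q^2) ^ (m+1+i) : ℝ)):ℂ) := by
      push_cast; ring
    rw [hc]
    have hlt : (q^2) ^ (m+1+i) < 1 := pow_lt_one₀ hr0.le hr1 (by omega)
    exact_mod_cast (by nlinarith : (1 - (q^2)^(m+1+i) : ℝ) ≠ 0)
  have hW : (∏ i ∈ Finset.range s, ((q:ℂ)^2) ^ (m + s - i)) ≠ 0 :=
    Finset.prod_ne_zero_iff.2 fun i _ => pow_ne_zero _ hQ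
  have hsh : qp (((q:ℂ)^2)⁻¹ ^ (m+s)) ((q:ℂ)^2) s =
      (-1)^s * (∏ i ∈ Finset.range s, (1 - ((q:ℂ)^2) ^ (m+1+i))) *
        (∏ i ∈ Finset.range s, ((q:ℂ)^2) ^ (m + s - i))⁻¹ := by
    rw [← qp_shift ((q:ℂ)^2) hQ m s]
    field_simp
  have hprodW : (∏ i ∈ Finset.range s, ((q:ℂ)^2) ^ (m + s - i))
      = (q:ℂ) ^ (2 * ∑ i ∈ Finset.range s, (m + s - i)) := by
    rw [Finset.prod_pow_eq_pow_sum, ← pow_mul]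
  have hpow' : (q:ℂ) ^ ((m+s) * ((m+s) - 1) + (2*(s*(1+j)) + 2*(m*j)))
      = (q:ℂ) ^ (m * (m - 1) + (2*((m+s)*j) + 2 * ∑ i ∈ Finset.range s, (m + s - i))) := by
    congr 1
    have hN := sum_shift_val m s
    have h1 := natmul_pred_cast (m+s)
    have h2 := natmul_pred_cast m
    zify [hN] at *
    linear_combination h1 - h2 + hN
  rw [ha1, ha2, qp_split ((q:ℂ)^2) m s, hsh, hprodW]
  rw [show (((q:ℂ)^2)⁻¹ ^ (m+s)) ^ j = ((q:ℂ)⁻¹) ^ (2*((m+s)*j)) by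
    rw [← inv_pow, ← pow_mul, ← pow_mul]]
  rw [show (((q:ℂ)^2)⁻¹ ^ m) ^ j = ((q:ℂ)⁻¹) ^ (2*(m*j)) by
    rw [← inv_pow, ← pow_mul, ← pow_mul]]
  rw [show (((q:ℂ)^2)⁻¹) ^ (s*(1+j)) = ((q:ℂ)⁻¹) ^ (2*(s*(1+j))) by
    rw [← inv_pow, ← pow_mul]]
  rw [show ((q:ℂ) ^ (2 * ∑ i ∈ Finset.range s, (m + s - i)))⁻¹
      = ((q:ℂ)⁻¹) ^ (2 * ∑ i ∈ Finset.range s, (m + s - i)) by rw [inv_pow]]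
  field_simp
  simp only [one_div, inv_pow]
  field_simp
  linear_combination (((q ^ (2*τ) : ℝ) : ℂ) ^ m * ((q ^ (2*τ) : ℝ) : ℂ) ^ s) * hpow'


lemma summable_basic (q τ : ℝ) (hq0 : 0 < q) (hq1 : q < 1) (j s : ℕ) :
    Summable (fun n : ℕ => ((q ^ (2 * (n : ℝ) * τ) : ℝ) : ℂ) * (q : ℂ) ^ (n * (n - 1)) /
      qp ((q : ℂ) ^ 2) ((q : ℂ) ^ 2) n *
      ((((q : ℂ) ^ 2)⁻¹ ^ n) ^ j * qp (((q : ℂ) ^ 2)⁻¹ ^ n) ((q : ℂ) ^ 2) s)) := by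
  have := summable_F q τ hq0 hq1 j s (fun _ => 1) (by simp)
  simpa using this

lemma ortho (q τ : ℝ) (hq0 : 0 < q) (hq1 : q < 1) (k j : ℕ) (hjk : j < k) :
    Lfun q τ (fun x => x ^ j * qCharlier ((q:ℂ)^2) k ((q ^ (2*τ) : ℝ) : ℂ) x) = 0 := by
  have hu : (q:ℂ) ≠ 0 := by exact_mod_cast hq0.ne'
  have hQ : ((q:ℂ)^2) ≠ 0 := pow_ne_zero 2 hu
  have hr0 : (0:ℝ) < q^2 := by positivity
  have hr1 : q^2 < 1 := by nlinarith
  have hQr : ((q:ℂ))^2 = ((q^2 : ℝ):ℂ) := by push_cast; ring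
  have hD : ∀ n, qp ((q:ℂ)^2) ((q:ℂ)^2) n ≠ 0 := by
    intro n; rw [hQr]; exact qpD_ne hr0 hr1 n
  have haC : ((q ^ (2*τ) : ℝ) : ℂ) ≠ 0 := by
    exact_mod_cast (Real.rpow_pos_of_pos hq0 (2*τ)).ne'
  rw [Lfun]
  have hterm : ∀ n : ℕ,
      ((q ^ (2 * (n : ℝ) * τ) : ℝ) : ℂ) * (q : ℂ) ^ (n * (n - 1)) /
          qp ((q:ℂ)^2) ((q:ℂ)^2) n *
        ((((q:ℂ)^2)⁻¹ ^ n) ^ j * qCharlier ((q:ℂ)^2) k ((q ^ (2*τ) : ℝ) : ℂ) (((q:ℂ)^2)⁻¹ ^ n))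
      = ∑ s ∈ Finset.range (k+1),
          (qp (((q:ℂ)^2)⁻¹ ^ k) ((q:ℂ)^2) s / qp ((q:ℂ)^2) ((q:ℂ)^2) s *
            (-((q:ℂ)^2) ^ (k+1) / ((q ^ (2*τ) : ℝ) : ℂ)) ^ s) *
          (((q ^ (2 * (n : ℝ) * τ) : ℝ) : ℂ) * (q : ℂ) ^ (n * (n - 1)) /
              qp ((q:ℂ)^2) ((q:ℂ)^2) n *
            ((((q:ℂ)^2)⁻¹ ^ n) ^ j * qp (((q:ℂ)^2)⁻¹ ^ n) ((q:ℂ)^2) s)) := by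
    intro n
    rw [qCharlier, Finset.mul_sum, Finset.mul_sum]
    refine Finset.sum_congr rfl fun s _ => ?_
    ring
  calc (∑' n : ℕ, ((q ^ (2 * (n : ℝ) * τ) : ℝ) : ℂ) * (q : ℂ) ^ (n * (n - 1)) /
          qp ((q:ℂ)^2) ((q:ℂ)^2) n *
          ((fun x => x ^ j * qCharlier ((q:ℂ)^2) k ((q ^ (2*τ) : ℝ) : ℂ) x) (((q:ℂ)^2)⁻¹ ^ n)))
      = ∑' n : ℕ, ∑ s ∈ Finset.range (k+1),
          (qp (((q:ℂ)^2)⁻¹ ^ k) ((q:ℂ)^2) s / qp ((q:ℂ)^2) ((q:ℂ)^2) s *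
            (-((q:ℂ)^2) ^ (k+1) / ((q ^ (2*τ) : ℝ) : ℂ)) ^ s) *
          (((q ^ (2 * (n : ℝ) * τ) : ℝ) : ℂ) * (q : ℂ) ^ (n * (n - 1)) /
              qp ((q:ℂ)^2) ((q:ℂ)^2) n *
            ((((q:ℂ)^2)⁻¹ ^ n) ^ j * qp (((q:ℂ)^2)⁻¹ ^ n) ((q:ℂ)^2) s)) := by
        exact tsum_congr fun n => hterm n
    _ = ∑ s ∈ Finset.range (k+1), ∑' n : ℕ,
          (qp (((q:ℂ)^2)⁻¹ ^ k) ((q:ℂ)^2) s / qp ((q:ℂ)^2) ((q:ℂ)^2) s *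
            (-((q:ℂ)^2) ^ (k+1) / ((q ^ (2*τ) : ℝ) : ℂ)) ^ s) *
          (((q ^ (2 * (n : ℝ) * τ) : ℝ) : ℂ) * (q : ℂ) ^ (n * (n - 1)) /
              qp ((q:ℂ)^2) ((q:ℂ)^2) n *
            ((((q:ℂ)^2)⁻¹ ^ n) ^ j * qp (((q:ℂ)^2)⁻¹ ^ n) ((q:ℂ)^2) s)) := by
        exact Summable.tsum_finsetSum fun s _ => (summable_basic q τ hq0 hq1 j s).mul_left _
    _ = ∑ s ∈ Finset.range (k+1),
          (qp (((q:ℂ)^2)⁻¹ ^ k) ((q:ℂ)^2) s / qp ((q:ℂ)^2) ((q:ℂ)^2) s *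
            (-((q:ℂ)^2) ^ (k+1) / ((q ^ (2*τ) : ℝ) : ℂ)) ^ s) *
          (((-1)^s * ((q ^ (2*τ) : ℝ) : ℂ) ^ s * (((q:ℂ)^2)⁻¹) ^ (s * (1 + j))) *
           ∑' m : ℕ, ((q ^ (2 * (m : ℝ) * τ) : ℝ) : ℂ) * (q : ℂ) ^ (m * (m - 1)) /
              qp ((q:ℂ)^2) ((q:ℂ)^2) m * ((((q:ℂ)^2)⁻¹ ^ m) ^ j)) := by
        refine Finset.sum_congr rfl fun s _ => ?_
        rw [tsum_mul_left]
        congr 1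
        -- shift the sum by s
        have hvan : ∀ i ∈ Finset.range s,
            ((q ^ (2 * (i : ℝ) * τ) : ℝ) : ℂ) * (q : ℂ) ^ (i * (i - 1)) /
              qp ((q:ℂ)^2) ((q:ℂ)^2) i *
              ((((q:ℂ)^2)⁻¹ ^ i) ^ j * qp (((q:ℂ)^2)⁻¹ ^ i) ((q:ℂ)^2) s) = 0 := by
          intro i hi
          have h0 : qp (((q:ℂ)^2)⁻¹ ^ i) ((q:ℂ)^2) s = 0 := by
            refine Finset.prod_eq_zero hi ?_
            rw [inv_pow, inv_mul_cancel₀ (pow_ne_zero _ hQ)]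
            ring
          rw [h0, mul_zero, mul_zero]
        have hshift := Summable.sum_add_tsum_nat_add s (summable_basic q τ hq0 hq1 j s)
        rw [Finset.sum_eq_zero hvan, zero_add] at hshift
        rw [← hshift]
        have hsi : ∀ m : ℕ,
            ((q ^ (2 * ((m + s : ℕ) : ℝ) * τ) : ℝ) : ℂ) * (q : ℂ) ^ ((m+s) * ((m+s) - 1)) /
              qp ((q:ℂ)^2) ((q:ℂ)^2) (m+s) *
              ((((q:ℂ)^2)⁻¹ ^ (m+s)) ^ j * qp (((q:ℂ)^2)⁻¹ ^ (m+s)) ((q:ℂ)^2) s)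
            = ((-1)^s * ((q ^ (2*τ) : ℝ) : ℂ) ^ s * (((q:ℂ)^2)⁻¹) ^ (s * (1 + j))) *
              (((q ^ (2 * (m : ℝ) * τ) : ℝ) : ℂ) * (q : ℂ) ^ (m * (m - 1)) /
                qp ((q:ℂ)^2) ((q:ℂ)^2) m * ((((q:ℂ)^2)⁻¹ ^ m) ^ j)) :=
          fun m => shift_identity q τ hq0 hq1 j s m
        rw [tsum_congr hsi, tsum_mul_left]
    _ = 0 := by
        set E := ∑' m : ℕ, ((q ^ (2 * (m : ℝ) * τ) : ℝ) : ℂ) * (q : ℂ) ^ (m * (m - 1)) /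
            qp ((q:ℂ)^2) ((q:ℂ)^2) m * ((((q:ℂ)^2)⁻¹ ^ m) ^ j) with hE
        have hbase : (-((q:ℂ)^2) ^ (k+1) / ((q ^ (2*τ) : ℝ) : ℂ)) * ((-1) *
            (((q ^ (2*τ) : ℝ) : ℂ) * (((q:ℂ)^2)⁻¹) ^ (1 + j)))
            = ((q:ℂ)^2) ^ (k - j) := by
          have hkj : (k - j) + (1 + j) = k + 1 := by omega
          have hsplit : ((q:ℂ)^2) ^ (k+1) = ((q:ℂ)^2) ^ (k-j) * ((q:ℂ)^2) ^ (1+j) := by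
            rw [← pow_add, hkj]
          field_simp
          rw [hsplit]
          rw [one_div, inv_pow, mul_assoc, mul_inv_cancel₀ (pow_ne_zero _ hQ), mul_one]
        have hAK : ∀ s ∈ Finset.range (k+1),
            (qp (((q:ℂ)^2)⁻¹ ^ k) ((q:ℂ)^2) s / qp ((q:ℂ)^2) ((q:ℂ)^2) s *
              (-((q:ℂ)^2) ^ (k+1) / ((q ^ (2*τ) : ℝ) : ℂ)) ^ s) *
            (((-1)^s * ((q ^ (2*τ) : ℝ) : ℂ) ^ s * (((q:ℂ)^2)⁻¹) ^ (s * (1 + j))) * E)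
            = (qp (((q:ℂ)^2)⁻¹ ^ k) ((q:ℂ)^2) s / qp ((q:ℂ)^2) ((q:ℂ)^2) s *
                (((q:ℂ)^2) ^ (k - j)) ^ s) * E := by
          intro s _
          have hcol : (-((q:ℂ)^2) ^ (k+1) / ((q ^ (2*τ) : ℝ) : ℂ)) ^ s *
              ((-1)^s * (((q ^ (2*τ) : ℝ) : ℂ) ^ s * ((((q:ℂ)^2)⁻¹) ^ (1 + j)) ^ s))
              = (((q:ℂ)^2) ^ (k - j)) ^ s := by
            rw [← hbase, mul_pow, mul_pow, mul_pow]
          have hexp : (((q:ℂ)^2)⁻¹) ^ (s * (1 + j)) = ((((q:ℂ)^2)⁻¹) ^ (1 + j)) ^ s := by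
            rw [mul_comm s (1+j), pow_mul]
          rw [hexp]
          calc (qp (((q:ℂ)^2)⁻¹ ^ k) ((q:ℂ)^2) s / qp ((q:ℂ)^2) ((q:ℂ)^2) s *
              (-((q:ℂ)^2) ^ (k+1) / ((q ^ (2*τ) : ℝ) : ℂ)) ^ s) *
              (((-1)^s * ((q ^ (2*τ) : ℝ) : ℂ) ^ s * ((((q:ℂ)^2)⁻¹) ^ (1 + j)) ^ s) * E)
              = (qp (((q:ℂ)^2)⁻¹ ^ k) ((q:ℂ)^2) s / qp ((q:ℂ)^2) ((q:ℂ)^2) s) *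
                ((-((q:ℂ)^2) ^ (k+1) / ((q ^ (2*τ) : ℝ) : ℂ)) ^ s *
                  ((-1)^s * (((q ^ (2*τ) : ℝ) : ℂ) ^ s * ((((q:ℂ)^2)⁻¹) ^ (1 + j)) ^ s))) * E := by
                ring
            _ = _ := by rw [hcol]
        rw [Finset.sum_congr rfl hAK, ← Finset.sum_mul,
          qp_binom ((q:ℂ)^2) hQ hD k (((q:ℂ)^2) ^ (k - j))]
        have h2 : (((q:ℂ)^2)⁻¹) ^ k = (((q:ℂ)^2)⁻¹) ^ (k-j) * (((q:ℂ)^2)⁻¹) ^ j := by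
          rw [← pow_add]; congr 1; omega
        have hxz : ((q:ℂ)^2) ^ (k-j) * (((q:ℂ)^2)⁻¹) ^ k = (((q:ℂ)^2)⁻¹) ^ j := by
          rw [h2, ← mul_assoc, inv_pow, mul_inv_cancel₀ (pow_ne_zero _ hQ), one_mul]
        rw [hxz]
        have hz : qp ((((q:ℂ)^2))⁻¹ ^ j) ((q:ℂ)^2) k = 0 := by
          refine Finset.prod_eq_zero (Finset.mem_range.2 hjk) ?_
          rw [inv_pow, inv_mul_cancel₀ (pow_ne_zero _ hQ)]
          ring
        rw [hz, zero_mul]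


lemma qCharlier_poly (Q : ℂ) (l : ℕ) (a : ℂ) :
    ∃ e : ℕ → ℂ, e 0 = qCharlier Q l a 0 ∧
      ∀ x : ℂ, qCharlier Q l a x = ∑ t ∈ Finset.range (l+1), e t * x ^ t := by
  classical
  set P : Polynomial ℂ := ∑ s ∈ Finset.range (l+1),
    Polynomial.C (qp (Q⁻¹ ^ l) Q s / qp Q Q s * (-Q ^ (l+1) / a) ^ s) *
      ∏ i ∈ Finset.range s, (1 - Polynomial.C (Q ^ i) * Polynomial.X) with hP
  have heval : ∀ x : ℂ, P.eval x = qCharlier Q l a x := by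
    intro x
    rw [hP, qCharlier, Polynomial.eval_finset_sum]
    refine Finset.sum_congr rfl fun s _ => ?_
    rw [Polynomial.eval_mul, Polynomial.eval_C, Polynomial.eval_prod]
    have hqp : ∏ i ∈ Finset.range s, Polynomial.eval x (1 - Polynomial.C (Q ^ i) * Polynomial.X)
        = qp x Q s := by
      rw [qp]
      refine Finset.prod_congr rfl fun i _ => ?_
      simp [mul_comm]
    rw [hqp]
    ring
  have hdeg : P.natDegree < l + 1 := by
    refine Nat.lt_succ_of_le ?_
    refine Polynomial.natDegree_sum_le_of_forall_le _ _ fun s hs => ?_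
    refine le_trans (Polynomial.natDegree_C_mul_le _ _) ?_
    refine le_trans (Polynomial.natDegree_prod_le _ _) ?_
    have h1 : ∀ i ∈ Finset.range s,
        (1 - Polynomial.C (Q ^ i) * Polynomial.X).natDegree ≤ 1 := by
      intro i _
      refine le_trans (Polynomial.natDegree_sub_le _ _) ?_
      simp only [Polynomial.natDegree_one, max_le_iff]
      exact ⟨Nat.zero_le _, le_trans (Polynomial.natDegree_C_mul_le _ _) Polynomial.natDegree_X_le⟩
    refine le_trans (Finset.sum_le_sum h1) ?_
    rw [Finset.sum_const, Finset.card_range, smul_eq_mul, mul_one]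
    rw [Finset.mem_range] at hs
    omega
  refine ⟨fun t => P.coeff t, ?_, fun x => ?_⟩
  · show P.coeff 0 = _
    rw [← heval 0, Polynomial.coeff_zero_eq_eval_zero]
  · rw [← heval x, Polynomial.eval_eq_sum_range' hdeg]

lemma summable_LF (q τ : ℝ) (hq0 : 0 < q) (hq1 : q < 1) (k j : ℕ) (b : ℕ → ℂ)
    (hb : ∀ n, ‖b n‖ ≤ 1) :
    Summable (fun n : ℕ => ((q ^ (2 * (n : ℝ) * τ) : ℝ) : ℂ) * (q : ℂ) ^ (n * (n - 1)) /
      qp ((q : ℂ) ^ 2) ((q : ℂ) ^ 2) n *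
      (b n * ((((q : ℂ) ^ 2)⁻¹ ^ n) ^ j *
        qCharlier ((q:ℂ)^2) k ((q ^ (2*τ) : ℝ) : ℂ) (((q : ℂ) ^ 2)⁻¹ ^ n)))) := by
  have hfun : (fun n : ℕ => ((q ^ (2 * (n : ℝ) * τ) : ℝ) : ℂ) * (q : ℂ) ^ (n * (n - 1)) /
      qp ((q : ℂ) ^ 2) ((q : ℂ) ^ 2) n *
      (b n * ((((q : ℂ) ^ 2)⁻¹ ^ n) ^ j *
        qCharlier ((q:ℂ)^2) k ((q ^ (2*τ) : ℝ) : ℂ) (((q : ℂ) ^ 2)⁻¹ ^ n))))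
      = fun n : ℕ => ∑ s ∈ Finset.range (k+1),
          (qp (((q:ℂ)^2)⁻¹ ^ k) ((q:ℂ)^2) s / qp ((q:ℂ)^2) ((q:ℂ)^2) s *
            (-((q:ℂ)^2) ^ (k+1) / ((q ^ (2*τ) : ℝ) : ℂ)) ^ s) *
          (((q ^ (2 * (n : ℝ) * τ) : ℝ) : ℂ) * (q : ℂ) ^ (n * (n - 1)) /
            qp ((q : ℂ) ^ 2) ((q : ℂ) ^ 2) n *
            (b n * ((((q : ℂ) ^ 2)⁻¹ ^ n) ^ j * qp (((q : ℂ) ^ 2)⁻¹ ^ n) ((q:ℂ)^2) s))) := by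
    funext n
    rw [qCharlier, Finset.mul_sum, Finset.mul_sum, Finset.mul_sum]
    refine Finset.sum_congr rfl fun s _ => ?_
    ring
  rw [hfun]
  exact summable_sum fun s _ => (summable_F q τ hq0 hq1 j s b hb).mul_left _


/-- For `k ≥ l`: `L(x⁻¹ cₖ(x;q^{2τ};q²) cₗ(x;q^{2τ};q²)) = cₗ(0;q^{2τ};q²) ⬝ L(x⁻¹ cₖ(x;q^{2τ};q²))`. -/
theorem stmt8 (q τ : ℝ) (hq : 0 < q) (hq1 : q < 1) (k l : ℕ) (hkl : l ≤ k) :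
    Lfun q τ (fun x =>
        x⁻¹ * qCharlier ((q : ℂ) ^ 2) k ((q ^ (2 * τ) : ℝ) : ℂ) x *
          qCharlier ((q : ℂ) ^ 2) l ((q ^ (2 * τ) : ℝ) : ℂ) x)
      = qCharlier ((q : ℂ) ^ 2) l ((q ^ (2 * τ) : ℝ) : ℂ) 0 *
          Lfun q τ (fun x => x⁻¹ * qCharlier ((q : ℂ) ^ 2) k ((q ^ (2 * τ) : ℝ) : ℂ) x) := by
  obtain ⟨e, he0, heq⟩ := qCharlier_poly ((q:ℂ)^2) l ((q ^ (2 * τ) : ℝ) : ℂ)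
  have hu : (q:ℂ) ≠ 0 := by exact_mod_cast hq.ne'
  have hQ : ((q:ℂ)^2) ≠ 0 := pow_ne_zero 2 hu
  -- summability facts
  have hsum0 : Summable (fun n : ℕ =>
      ((q ^ (2 * (n : ℝ) * τ) : ℝ) : ℂ) * (q : ℂ) ^ (n * (n - 1)) /
        qp ((q : ℂ) ^ 2) ((q : ℂ) ^ 2) n *
        ((((q : ℂ) ^ 2)⁻¹ ^ n)⁻¹ *
          qCharlier ((q:ℂ)^2) k ((q ^ (2*τ) : ℝ) : ℂ) (((q : ℂ) ^ 2)⁻¹ ^ n))) := by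
    have hb : ∀ n : ℕ, ‖(((q : ℂ) ^ 2)⁻¹ ^ n)⁻¹‖ ≤ 1 := by
      intro n
      rw [inv_pow, inv_inv, norm_pow]
      have : ‖(q:ℂ)^2‖ = q^2 := by
        rw [norm_pow, Complex.norm_real, Real.norm_eq_abs, abs_of_pos hq]
      rw [this]
      exact pow_le_one₀ (by positivity) (by nlinarith)
    have := summable_LF q τ hq hq1 k 0 (fun n => (((q : ℂ) ^ 2)⁻¹ ^ n)⁻¹) hb
    simpa using this
  have hsumt : ∀ t : ℕ, Summable (fun n : ℕ =>
      ((q ^ (2 * (n : ℝ) * τ) : ℝ) : ℂ) * (q : ℂ) ^ (n * (n - 1)) /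
        qp ((q : ℂ) ^ 2) ((q : ℂ) ^ 2) n *
        ((((q : ℂ) ^ 2)⁻¹ ^ n) ^ t *
          qCharlier ((q:ℂ)^2) k ((q ^ (2*τ) : ℝ) : ℂ) (((q : ℂ) ^ 2)⁻¹ ^ n))) := by
    intro t
    have := summable_LF q τ hq hq1 k t (fun _ => 1) (by simp)
    simpa using this
  rw [Lfun, Lfun]
  have hterm : ∀ n : ℕ,
      ((q ^ (2 * (n : ℝ) * τ) : ℝ) : ℂ) * (q : ℂ) ^ (n * (n - 1)) /
        qp ((q : ℂ) ^ 2) ((q : ℂ) ^ 2) n *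
        ((fun x => x⁻¹ * qCharlier ((q : ℂ) ^ 2) k ((q ^ (2 * τ) : ℝ) : ℂ) x *
          qCharlier ((q : ℂ) ^ 2) l ((q ^ (2 * τ) : ℝ) : ℂ) x) (((q : ℂ) ^ 2)⁻¹ ^ n))
      = qCharlier ((q : ℂ) ^ 2) l ((q ^ (2 * τ) : ℝ) : ℂ) 0 *
          (((q ^ (2 * (n : ℝ) * τ) : ℝ) : ℂ) * (q : ℂ) ^ (n * (n - 1)) /
            qp ((q : ℂ) ^ 2) ((q : ℂ) ^ 2) n *
            ((((q : ℂ) ^ 2)⁻¹ ^ n)⁻¹ *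
              qCharlier ((q:ℂ)^2) k ((q ^ (2*τ) : ℝ) : ℂ) (((q : ℂ) ^ 2)⁻¹ ^ n)))
        + ∑ t ∈ Finset.range l, e (t+1) *
            (((q ^ (2 * (n : ℝ) * τ) : ℝ) : ℂ) * (q : ℂ) ^ (n * (n - 1)) /
              qp ((q : ℂ) ^ 2) ((q : ℂ) ^ 2) n *
              ((((q : ℂ) ^ 2)⁻¹ ^ n) ^ t *
                qCharlier ((q:ℂ)^2) k ((q ^ (2*τ) : ℝ) : ℂ) (((q : ℂ) ^ 2)⁻¹ ^ n))) := by
    intro n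
    have hx : (((q:ℂ)^2)⁻¹ ^ n) ≠ 0 := pow_ne_zero _ (inv_ne_zero hQ)
    simp only []
    rw [heq (((q : ℂ) ^ 2)⁻¹ ^ n), Finset.sum_range_succ', pow_zero, mul_one, ← he0]
    rw [mul_add, mul_add, Finset.mul_sum, Finset.mul_sum]
    rw [add_comm]
    congr 1
    · ring
    · refine Finset.sum_congr rfl fun t _ => ?_
      rw [pow_succ' (((q:ℂ)^2)⁻¹ ^ n) t]
      calc ((q ^ (2 * (n : ℝ) * τ) : ℝ) : ℂ) * (q : ℂ) ^ (n * (n - 1)) /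
            qp ((q : ℂ) ^ 2) ((q : ℂ) ^ 2) n *
            ((((q : ℂ) ^ 2)⁻¹ ^ n)⁻¹ *
              qCharlier ((q:ℂ)^2) k ((q ^ (2*τ) : ℝ) : ℂ) (((q : ℂ) ^ 2)⁻¹ ^ n) *
              (e (t+1) * ((((q : ℂ) ^ 2)⁻¹ ^ n) * (((q : ℂ) ^ 2)⁻¹ ^ n) ^ t)))
          = ((((q : ℂ) ^ 2)⁻¹ ^ n)⁻¹ * (((q : ℂ) ^ 2)⁻¹ ^ n)) *
            (e (t+1) * (((q ^ (2 * (n : ℝ) * τ) : ℝ) : ℂ) * (q : ℂ) ^ (n * (n - 1)) /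
              qp ((q : ℂ) ^ 2) ((q : ℂ) ^ 2) n *
              ((((q : ℂ) ^ 2)⁻¹ ^ n) ^ t *
                qCharlier ((q:ℂ)^2) k ((q ^ (2*τ) : ℝ) : ℂ) (((q : ℂ) ^ 2)⁻¹ ^ n)))) := by
            ring
        _ = _ := by rw [inv_mul_cancel₀ hx, one_mul]
  rw [tsum_congr hterm, Summable.tsum_add (hsum0.mul_left _)
    (summable_sum fun t _ => ((hsumt t).mul_left _))]
  rw [tsum_mul_left, Summable.tsum_finsetSum fun t _ => ((hsumt t).mul_left _)]
  have hzero : ∀ t ∈ Finset.range l, ∑' n : ℕ, e (t+1) *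
      (((q ^ (2 * (n : ℝ) * τ) : ℝ) : ℂ) * (q : ℂ) ^ (n * (n - 1)) /
        qp ((q : ℂ) ^ 2) ((q : ℂ) ^ 2) n *
        ((((q : ℂ) ^ 2)⁻¹ ^ n) ^ t *
          qCharlier ((q:ℂ)^2) k ((q ^ (2*τ) : ℝ) : ℂ) (((q : ℂ) ^ 2)⁻¹ ^ n))) = 0 := by
    intro t ht
    rw [Finset.mem_range] at ht
    rw [tsum_mul_left]
    have horto := ortho q τ hq hq1 k t (lt_of_lt_of_le ht hkl)
    simp only [Lfun] at horto
    rw [horto, mul_zero]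
  rw [Finset.sum_congr rfl hzero, Finset.sum_const, smul_zero, add_zero]
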